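/- arXiv:2007.13047 — 6 statements merged into one kernel-verified Lean document; each statement's English description precedes it below -/
import Mathlib

section
/- Let K be a field that is not algebraically closed, and let f_1,…,f_r ∈ K[x_1,…,x_n]. Then there exists a polynomial g ∈ K[x_1,…,x_n] such that for all (a_1,…,a_n) ∈ K^n, g(a_1,…,a_n) = 0 if and only if f_i(a_1,…,a_n) = 0 for every i = 1,…,r. -/
universe u

open Polynomial Finset

lemma key_sum {K : Type u} [Field K] (p : K[X]) (hd : 0 < p.natDegree)
    (hroot : ∀ x : K, p.eval x ≠ 0) (a b : K) :
    (∑ i ∈ Finset.range (p.natDegree + 1), p.coeff i * a ^ i * b ^ (p.natDegree - i)) = 0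
      ↔ a = 0 ∧ b = 0 := by
  constructor
  · intro h
    by_cases hb : b = 0
    · subst hb
      have hs : (∑ i ∈ Finset.range (p.natDegree + 1),
          p.coeff i * a ^ i * (0:K) ^ (p.natDegree - i)) = p.coeff p.natDegree * a ^ p.natDegree := by
        rw [Finset.sum_eq_single p.natDegree]
        · simp
        · intro i hi hne
          have : i < p.natDegree := by
            have := Finset.mem_range.mp hi; omega
          rw [zero_pow (by omega : p.natDegree - i ≠ 0), mul_zero]
        · intro hni; exact absurd (Finset.self_mem_range_succ _) hni
      rw [hs] at h
      have hp0 : p ≠ 0 := fun h0 => hroot 0 (by simp [h0])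
      have hc : p.coeff p.natDegree ≠ 0 := by
        rw [← Polynomial.leadingCoeff]
        exact Polynomial.leadingCoeff_ne_zero.mpr hp0
      have := (mul_eq_zero.mp h).resolve_left hc
      exact ⟨pow_eq_zero_iff (by omega : p.natDegree ≠ 0) |>.mp this, rfl⟩
    · exfalso
      have hs : (∑ i ∈ Finset.range (p.natDegree + 1),
          p.coeff i * a ^ i * b ^ (p.natDegree - i)) = b ^ p.natDegree * p.eval (a / b) := by
        rw [Polynomial.eval_eq_sum_range, Finset.mul_sum]
        refine Finset.sum_congr rfl fun i hi => ?_
        have hile : i ≤ p.natDegree := by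
          have := Finset.mem_range.mp hi; omega
        rw [pow_sub₀ b hb hile, div_pow]
        field_simp
      rw [hs] at h
      have := (mul_eq_zero.mp h).resolve_left (pow_ne_zero _ hb)
      exact hroot _ this
  · rintro ⟨rfl, rfl⟩
    refine Finset.sum_eq_zero fun i hi => ?_
    rcases Nat.eq_zero_or_pos i with rfl | hipos
    · rw [zero_pow (by omega : p.natDegree - 0 ≠ 0), mul_zero]
    · rw [zero_pow (by omega : i ≠ 0), mul_zero, zero_mul]

/-- Over a field `K` that is not algebraically closed, any finite system of
polynomial equations `f₁ = ⋯ = f_r = 0` in `n` variables is equivalent to a single polynomial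
equation `g = 0`. -/
theorem exists_single_polynomial_of_system
    (K : Type u) [Field K] (hK : ¬IsAlgClosed K)
    (n r : ℕ) (f : Fin r → MvPolynomial (Fin n) K) :
    ∃ g : MvPolynomial (Fin n) K, ∀ a : Fin n → K,
      MvPolynomial.eval a g = 0 ↔ ∀ i : Fin r, MvPolynomial.eval a (f i) = 0 := by
  -- get a polynomial with no root
  have hp : ∃ p : K[X], 0 < p.natDegree ∧ ∀ x : K, p.eval x ≠ 0 := by
    by_contra hcon
    push_neg at hcon
    exact hK (IsAlgClosed.of_exists_root K (fun p hm hirr => hcon p hirr.natDegree_pos))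
  obtain ⟨p, hd, hroot⟩ := hp
  clear hK
  induction r with
  | zero => exact ⟨0, fun a => by simp⟩
  | succ r ih =>
    obtain ⟨g', hg'⟩ := ih (fun i => f i.succ)
    refine ⟨∑ i ∈ Finset.range (p.natDegree + 1),
      MvPolynomial.C (p.coeff i) * (f 0) ^ i * g' ^ (p.natDegree - i), fun a => ?_⟩
    have : MvPolynomial.eval a (∑ i ∈ Finset.range (p.natDegree + 1),
        MvPolynomial.C (p.coeff i) * (f 0) ^ i * g' ^ (p.natDegree - i))
        = ∑ i ∈ Finset.range (p.natDegree + 1),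
          p.coeff i * (MvPolynomial.eval a (f 0)) ^ i
            * (MvPolynomial.eval a g') ^ (p.natDegree - i) := by
      simp [map_sum]
    rw [this, key_sum p hd hroot, hg']
    constructor
    · rintro ⟨h0, hrest⟩ i
      refine Fin.cases h0 (fun j => hrest j) i
    · intro h
      exact ⟨h 0, fun j => h j.succ⟩
end

section
/- Let R be an integral domain with fraction field K, let L = K(α) be a finite field extension of K generated by an element α, and let M = L(β) be a finite Galois extension of L of degree d such that the minimal polynomial of β over L is monic with all coefficients in the subring R[α] of L. Then there exists t ∈ R with t ≠ 0 such that every root β' ∈ M of the minimal polynomial of β over L can be written as β' = Σ_{i=0}^{d−1} (s_i / t) β^i for some elements s_0,…,s_{d−1} ∈ R[α]. -/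
/-!
Every element of `M = L[β]` is an `L`-combination of `1, β, …, β^(d-1)`, and every element of
`L = K[α]` becomes an element of `R[α]` after multiplication by a suitable nonzero `t ∈ R`
(clear the denominators of its coordinates in the basis of powers of `α`). The conjugates of `β`
lying in `M` are finitely many, so all their coordinates form a finite family in `L`, and the
product of the individual denominators is a common one.
-/

open IntermediateField

theorem exists_eq_sum_pow_of_adjoin_eq_top {F E : Type*} [Field F] [Field E] [Algebra F E]
    [FiniteDimensional F E] {γ : E} (hγ : F⟮γ⟯ = ⊤) (y : E) :
    ∃ c : Fin (Module.finrank F E) → F, y = ∑ i, algebraMap F E (c i) * γ ^ (i : ℕ) := by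
  have hint : IsIntegral F γ := .of_finite F γ
  have hy : y ∈ Algebra.adjoin F {γ} := by
    rw [← adjoin_toSubalgebra, hγ]
    trivial
  rw [Algebra.adjoin_singleton_eq_range_aeval] at hy
  obtain ⟨f, hf⟩ := hy
  have hspan := hint.mem_span_pow ⟨f, hf.symm⟩
  rw [← adjoin.finrank hint, hγ, finrank_top'] at hspan
  obtain ⟨c, hc⟩ := (Submodule.mem_span_range_iff_exists_fun F).mp hspan
  exact ⟨c, by simp_rw [← hc, Algebra.smul_def]⟩

theorem Submodule.exists_forall_smul_mem_of_finite {R A : Type*} [CommSemiring R]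
    [AddCommMonoid A] [Module R A] (S : Submonoid R) (N : Submodule R A) {ι : Type*} [Finite ι]
    {f : ι → A} (h : ∀ i, ∃ b : S, (b : R) • f i ∈ N) : ∃ b : S, ∀ i, (b : R) • f i ∈ N := by
  cases nonempty_fintype ι
  choose b hb using h
  refine ⟨∏ i, b i, fun i => ?_⟩
  obtain ⟨c, hc⟩ := Finset.dvd_prod_of_mem b (Finset.mem_univ i)
  rw [hc, Submonoid.coe_mul, mul_comm, mul_smul]
  exact N.smul_mem _ (hb i)

theorem exists_smul_mem_adjoin_of_adjoin_eq_top (R K : Type*) {L : Type*} [CommRing R] [Field K]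
    [Algebra R K] [IsFractionRing R K] [Field L] [Algebra K L] [FiniteDimensional K L]
    [Algebra R L] [IsScalarTower R K L] {α : L} (hα : K⟮α⟯ = ⊤) (x : L) :
    ∃ b : nonZeroDivisors R, (b : R) • x ∈ Algebra.adjoin R {α} := by
  obtain ⟨c, rfl⟩ := exists_eq_sum_pow_of_adjoin_eq_top hα x
  obtain ⟨b, hb⟩ := IsLocalization.exist_integer_multiples_of_finite (nonZeroDivisors R) c
  choose r hr using hb
  refine ⟨b, ?_⟩
  rw [Finset.smul_sum]
  refine Subalgebra.sum_mem _ fun i _ => ?_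
  rw [Algebra.smul_def, ← mul_assoc, IsScalarTower.algebraMap_apply R K L, ← map_mul,
    ← Algebra.smul_def (b : R) (c i), ← hr i, ← IsScalarTower.algebraMap_apply]
  exact mul_mem (Subalgebra.algebraMap_mem _ _)
    (pow_mem (Algebra.self_mem_adjoin_singleton R α) _)

theorem conjugates_have_common_denominator_general
    (R : Type u) [CommRing R]
    (K : Type v) [Field K] [Algebra R K] [IsFractionRing R K]
    (L : Type w) [Field L] [Algebra K L] [FiniteDimensional K L]
    [Algebra R L] [IsScalarTower R K L]
    (α : L) (hα : IntermediateField.adjoin K {α} = ⊤)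
    (M : Type x) [Field M] [Algebra L M] [FiniteDimensional L M]
    (d : ℕ) (hd : Module.finrank L M = d)
    (β : M) (hβ : IntermediateField.adjoin L {β} = ⊤) :
    ∃ t : R, t ≠ 0 ∧
      ∀ β' : M, Polynomial.aeval β' (minpoly L β) = 0 →
        ∃ s : Fin d → L, (∀ i, s i ∈ Algebra.adjoin R ({α} : Set L)) ∧
          β' = ∑ i : Fin d, algebraMap L M (s i / algebraMap R L t) * β ^ (i : ℕ) := by
  classical
  have : Nontrivial R := (algebraMap R K).domain_nontrivial
  subst hd
  choose c hc using exists_eq_sum_pow_of_adjoin_eq_top hβ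
  let roots := ((minpoly L β).aroots M).toFinset
  obtain ⟨t, ht⟩ := (Algebra.adjoin R {α}).toSubmodule.exists_forall_smul_mem_of_finite
    (nonZeroDivisors R) (f := fun p : roots × Fin (Module.finrank L M) => c p.1 p.2)
    fun _ => exists_smul_mem_adjoin_of_adjoin_eq_top R K hα _
  have ht0 : algebraMap R L t ≠ 0 := by
    rw [IsScalarTower.algebraMap_apply R K L]
    exact (map_ne_zero _).2 (IsFractionRing.to_map_ne_zero_of_mem_nonZeroDivisors t.2)
  refine ⟨t, nonZeroDivisors.coe_ne_zero t, fun β' hβ' => ?_⟩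
  have hroot : β' ∈ roots := by
    simpa [roots] using ⟨minpoly.ne_zero (IsIntegral.of_finite L β), hβ'⟩
  refine ⟨fun i => (t : R) • c β' i, fun i => ht (⟨β', hroot⟩, i), ?_⟩
  simp_rw [Algebra.smul_def, mul_div_cancel_left₀ _ ht0]
  exact hc β'

/-- Let `R` be a domain with fraction field `K`, `L = K(α)` a finite extension
of `K`, and `M = L(β)` a finite Galois extension of `L` of degree `d` such that the minimal
polynomial of `β` over `L` has all its coefficients in `R[α]`.  Then there exists a nonzero
`t ∈ R` such that each conjugate `β'` of `β` over `L` can be written as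
`β' = Σ_{i<d} (s_i / t) β^i` with `s_0, …, s_{d-1} ∈ R[α]`. -/
theorem conjugates_have_common_denominator
    (R : Type u) [CommRing R] [IsDomain R]
    (K : Type v) [Field K] [Algebra R K] [IsFractionRing R K]
    (L : Type w) [Field L] [Algebra K L] [FiniteDimensional K L]
    [Algebra R L] [IsScalarTower R K L]
    (α : L) (hα : IntermediateField.adjoin K {α} = ⊤)
    (M : Type x) [Field M] [Algebra L M] [FiniteDimensional L M] [IsGalois L M]
    (d : ℕ) (hd : Module.finrank L M = d)
    (β : M) (hβ : IntermediateField.adjoin L {β} = ⊤)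
    (hcoeff : ∀ i : ℕ, (minpoly L β).coeff i ∈ Algebra.adjoin R ({α} : Set L)) :
    ∃ t : R, t ≠ 0 ∧
      ∀ β' : M, Polynomial.aeval β' (minpoly L β) = 0 →
        ∃ s : Fin d → L, (∀ i, s i ∈ Algebra.adjoin R ({α} : Set L)) ∧
          β' = ∑ i : Fin d, algebraMap L M (s i / algebraMap R L t) * β ^ (i : ℕ) :=
  conjugates_have_common_denominator_general R K L α hα M d hd β hβ
end

section
/- Let R_1 and R_2 be commutative rings, each equipped with a computable encoding (a Primcodable structure) under which equality, addition, and multiplication are computable. Let ι : R_1 → R_2 be a computable injective ring homomorphism whose range is a decidable (computable) subset of R_2, and suppose R_2 is generated as an R_1-module by elements ω_1,…,ω_r ∈ R_2, i.e., R_2 = {Σ_{i=1}^r ι(a_i)·ω_i : a_1,…,a_r ∈ R_1}. Assume that every computably enumerable subset of R_1^r is Diophantine over R_1. Then for every computably enumerable subset A ⊆ R_2, the set A_{R_1} = {(a_1,…,a_r) ∈ R_1^r : Σ_{i=1}^r ι(a_i)·ω_i ∈ A} is Diophantine over R_1. -/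
/-- A subset `S ⊆ R^ι` is Diophantine over `R` if it is cut out by a single polynomial
with coefficients in `R` using finitely many existential quantifiers over `R`. -/
def IsDiophantine {R : Type*} [CommRing R] {ι : Type*} (S : Set (ι → R)) : Prop :=
  ∃ (m : ℕ) (f : MvPolynomial (ι ⊕ Fin m) R),
    S = {a | ∃ y : Fin m → R, MvPolynomial.eval (Sum.elim a y) f = 0}

theorem Computable.fin_sum {α β : Type*} [Primcodable α] [Primcodable β] [AddCommMonoid β]
    (hadd : Computable fun p : β × β => p.1 + p.2) :
    ∀ {n : ℕ} {f : Fin n → α → β}, (∀ i, Computable (f i)) → Computable fun a => ∑ i, f i a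
  | 0, _, _ => by simpa using Computable.const (0 : β)
  | n + 1, f, hf => by
    simp only [Fin.sum_univ_succ]
    exact hadd.comp ((hf 0).pair (Computable.fin_sum hadd fun i => hf i.succ))

theorem Computable.fin_sum_map_mul {R₁ R₂ : Type*} [Primcodable R₁] [Primcodable R₂]
    [AddCommMonoid R₂] [Mul R₂] (hadd : Computable fun p : R₂ × R₂ => p.1 + p.2)
    (hmul : Computable fun p : R₂ × R₂ => p.1 * p.2) {φ : R₁ → R₂} (hφ : Computable φ)
    {r : ℕ} (ω : Fin r → R₂) :
    Computable fun a : Fin r → R₁ => ∑ i, φ (a i) * ω i :=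
  Computable.fin_sum hadd fun i =>
    hmul.comp ((hφ.comp (Computable.fin_app.comp Computable.id (Computable.const i))).pair
      (Computable.const (ω i)))

theorem pullback_of_listable_isDiophantine_general
    (R₁ : Type) [CommRing R₁] [Primcodable R₁]
    (R₂ : Type) [CommRing R₂] [Primcodable R₂]
    (hadd₂ : Computable fun p : R₂ × R₂ => p.1 + p.2)
    (hmul₂ : Computable fun p : R₂ × R₂ => p.1 * p.2)
    (ι : R₁ →+* R₂) (hιcomp : Computable fun x : R₁ => ι x)
    (r : ℕ) (ω : Fin r → R₂)
    (hdio : ∀ S : Set (Fin r → R₁), REPred (· ∈ S) → IsDiophantine S)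
    (A : Set R₂) (hA : REPred (· ∈ A)) :
    IsDiophantine {a : Fin r → R₁ | (∑ i, ι (a i) * ω i) ∈ A} :=
  hdio _ (hA.comp (Computable.fin_sum_map_mul hadd₂ hmul₂ hιcomp ω))

/-- Let `R₁`, `R₂` be computable commutative rings, `ι : R₁ → R₂` a computable
injective ring homomorphism with decidable range, and suppose `R₂` is generated as an
`R₁`-module by `ω₁, …, ω_r`.  If every computably enumerable subset of `R₁^r` is Diophantine
over `R₁`, then for every computably enumerable `A ⊆ R₂` the set
`{(a₁,…,a_r) ∈ R₁^r : Σ ι(a_i)·ω_i ∈ A}` is Diophantine over `R₁`. -/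
theorem pullback_of_listable_isDiophantine
    (R₁ : Type) [CommRing R₁] [Primcodable R₁]
    (R₂ : Type) [CommRing R₂] [Primcodable R₂]
    (heq₁ : ComputablePred fun p : R₁ × R₁ => p.1 = p.2)
    (hadd₁ : Computable fun p : R₁ × R₁ => p.1 + p.2)
    (hmul₁ : Computable fun p : R₁ × R₁ => p.1 * p.2)
    (heq₂ : ComputablePred fun p : R₂ × R₂ => p.1 = p.2)
    (hadd₂ : Computable fun p : R₂ × R₂ => p.1 + p.2)
    (hmul₂ : Computable fun p : R₂ × R₂ => p.1 * p.2)
    (ι : R₁ →+* R₂) (hιcomp : Computable fun x : R₁ => ι x)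
    (hιinj : Function.Injective ι)
    (hrange : ComputablePred fun x : R₂ => x ∈ Set.range ι)
    (r : ℕ) (ω : Fin r → R₂)
    (hgen : ∀ x : R₂, ∃ a : Fin r → R₁, x = ∑ i, ι (a i) * ω i)
    (hdio : ∀ S : Set (Fin r → R₁), REPred (· ∈ S) → IsDiophantine S)
    (A : Set R₂) (hA : REPred (· ∈ A)) :
    IsDiophantine {a : Fin r → R₁ | (∑ i, ι (a i) * ω i) ∈ A} :=
  pullback_of_listable_isDiophantine_general R₁ R₂ hadd₂ hmul₂ ι hιcomp r ω hdio A hA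
end

section
/- Let R_1 and R_2 be commutative rings, each equipped with a computable encoding (a Primcodable structure) under which equality, addition, and multiplication are computable, with R_2 an integral domain whose fraction field is not algebraically closed. Let ι : R_1 → R_2 be a computable injective ring homomorphism whose range is a decidable (computable) subset of R_2 and is Diophantine over R_2 (as a subset of R_2), and suppose R_2 is generated as an R_1-module by elements ω_1,…,ω_r ∈ R_2. Assume that every computably enumerable subset of R_1^k is Diophantine over R_1 for every k. Then every computably enumerable subset of R_2 is Diophantine over R_2. -/
/-!
Homogenizing a polynomial without roots in the fraction field of `R₂` gives `h` with
`h(u, w) = 0` only at `u = w = 0`, so a finite system of equations over `R₂` collapses to a single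
one; hence Diophantine subsets of `R₂ⁿ` are closed under finite intersections, projections and
polynomial images and preimages. The set of `c ∈ R₁ʳ` with `∑ ι(cᵢ) ωᵢ ∈ A` is listable, hence
Diophantine over `R₁`. Since `ι` is injective with Diophantine range, the image of this set under
`ι` is Diophantine over `R₂`, and `A` is in turn its image under `b ↦ ∑ bᵢ ωᵢ`.
-/

universe v

/-- A subset `S ⊆ R` is Diophantine over `R` (one-variable version). -/
def IsDiophantineSet {R : Type*} [CommRing R] (S : Set R) : Prop :=
  IsDiophantine {a : Fin 1 → R | a 0 ∈ S}

section Homogenize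

open Polynomial

theorem Polynomial.eval_homogenize_mul {R : Type*} [CommSemiring R] {p : R[X]} {n : ℕ}
    (hn : p.natDegree ≤ n) (x c : R) :
    MvPolynomial.eval ![c * x, c] (p.homogenize n) = c ^ n * p.eval x := by
  refine induction_with_natDegree_le
    (fun p => MvPolynomial.eval ![c * x, c] (p.homogenize n) = c ^ n * p.eval x) n
    (by simp) (fun m r _ hm => ?_) (fun f g _ _ hf hg => ?_) p hn
  · obtain ⟨k, rfl⟩ := Nat.exists_eq_add_of_le hm
    simp only [homogenize_C_mul, homogenize_X_pow hm, add_tsub_cancel_left, map_mul,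
      MvPolynomial.eval_C, map_pow, MvPolynomial.eval_X, Matrix.cons_val_zero, Matrix.cons_val_one,
      Matrix.cons_val_fin_one, eval_mul, eval_C, eval_pow, eval_X]
    ring
  · simp [homogenize_add, hf, hg, mul_add]

theorem Polynomial.eval_homogenize_zero {R : Type*} [CommSemiring R] (p : R[X]) (n : ℕ) (u : R) :
    MvPolynomial.eval ![u, 0] (p.homogenize n) = p.coeff n * u ^ n := by
  simp only [homogenize, map_sum, MvPolynomial.eval_monomial]
  rw [Finset.sum_eq_single (n, 0)]
  · simp
  · rintro ⟨i, j⟩ hij hne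
    have hj : j ≠ 0 := by rintro rfl; simp_all
    simp [hj]
  · simp

theorem Polynomial.eval_homogenize_natDegree_eq_zero_iff {K : Type*} [Field K] {p : K[X]}
    (hp : 0 < p.natDegree) (hroot : ∀ x, ¬p.IsRoot x) (u w : K) :
    MvPolynomial.eval ![u, w] (p.homogenize p.natDegree) = 0 ↔ u = 0 ∧ w = 0 := by
  refine ⟨fun h => ?_, ?_⟩
  · by_cases hw : w = 0
    · subst hw
      rw [eval_homogenize_zero, coeff_natDegree, mul_eq_zero, leadingCoeff_eq_zero] at h
      exact ⟨pow_eq_zero_iff hp.ne' |>.mp (h.resolve_left (ne_zero_of_natDegree_gt hp)), rfl⟩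
    · rw [← mul_div_cancel₀ u hw, eval_homogenize_mul le_rfl] at h
      exact absurd ((mul_eq_zero.mp h).resolve_left (pow_ne_zero _ hw)) (hroot _)
  · rintro ⟨rfl, rfl⟩
    simp [eval_homogenize_zero, hp.ne']

end Homogenize

def HasConjunctionPolynomial (R : Type*) [CommRing R] : Prop :=
  ∃ h : MvPolynomial (Fin 2) R, ∀ u w : R, MvPolynomial.eval ![u, w] h = 0 ↔ u = 0 ∧ w = 0

open Polynomial in
theorem hasConjunctionPolynomial_of_not_isAlgClosed (R : Type*) [CommRing R] [IsDomain R]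
    (K : Type*) [Field K] [Algebra R K] [IsFractionRing R K] (hK : ¬IsAlgClosed K) :
    HasConjunctionPolynomial R := by
  obtain ⟨p, -, hirr, hroot⟩ : ∃ p : K[X], p.Monic ∧ Irreducible p ∧ ∀ x, ¬p.IsRoot x := by
    by_contra! h
    exact hK (IsAlgClosed.of_exists_root K h)
  set φ := algebraMap R K
  have hφ : Function.Injective φ := IsFractionRing.injective R K
  obtain ⟨b, hb, hq⟩ := IsLocalization.integerNormalization_spec (nonZeroDivisors R) p
  set q := IsLocalization.integerNormalization (nonZeroDivisors R) p
  have hb0 : φ b ≠ 0 := (map_ne_zero_iff φ hφ).mpr (nonZeroDivisors.ne_zero hb)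
  have hqK : q.map φ = C (φ b) * p := by rw [hq, Algebra.smul_def]; rfl
  have hdeg : (q.map φ).natDegree = q.natDegree := natDegree_map_eq_of_injective hφ q
  have hdegK : (q.map φ).natDegree = p.natDegree := by rw [hqK, natDegree_C_mul hb0]
  have hqroot : ∀ x, ¬(q.map φ).IsRoot x := fun x hx => by
    rw [hqK, IsRoot, eval_mul, eval_C, mul_eq_zero] at hx
    exact hx.elim hb0 (hroot x)
  have hcomp : ∀ u w : R, φ ∘ ![u, w] = ![φ u, φ w] := fun u w => by
    ext i; fin_cases i <;> rfl
  refine ⟨q.homogenize q.natDegree, fun u w => ?_⟩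
  rw [← map_eq_zero_iff φ hφ, ← map_eq_zero_iff φ hφ (x := u), ← map_eq_zero_iff φ hφ (x := w),
    MvPolynomial.eval₂_comp, ← MvPolynomial.eval_map, ← homogenize_map, ← hdeg, hcomp]
  exact eval_homogenize_natDegree_eq_zero_iff (hdegK ▸ hirr.natDegree_pos) hqroot _ _

theorem exists_sumElim_iff {α β γ : Type*} {p : (α ⊕ β → γ) → Prop} :
    (∃ y, p y) ↔ ∃ a b, p (Sum.elim a b) :=
  ⟨fun ⟨y, hy⟩ => ⟨y ∘ Sum.inl, y ∘ Sum.inr, by rwa [Sum.elim_comp_inl_inr]⟩,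
    fun ⟨_, _, h⟩ => ⟨_, h⟩⟩

open MvPolynomial

theorem MvPolynomial.eval_bind₁ {R σ τ : Type*} [CommSemiring R] (v : τ → R)
    (g : σ → MvPolynomial τ R) (p : MvPolynomial σ R) :
    eval v (bind₁ g p) = eval (fun i => eval v (g i)) p :=
  aeval_bind₁ v g p

namespace IsDiophantine

variable {R : Type*} [CommRing R] {ι : Type*}

theorem setOf_exists_eval_eq_zero {τ : Type*} [Finite τ] (f : MvPolynomial (ι ⊕ τ) R) :
    IsDiophantine {a : ι → R | ∃ y : τ → R, eval (Sum.elim a y) f = 0} := by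
  cases nonempty_fintype τ
  let e := Fintype.equivFin τ
  refine ⟨_, rename (Sum.map id e) f, Set.ext fun a => ?_⟩
  simp only [Set.mem_ofPred_eq, eval_rename, Sum.elim_comp_map, Function.comp_id]
  exact ⟨fun ⟨y, hy⟩ => ⟨y ∘ e.symm, by simpa [Function.comp_assoc] using hy⟩,
    fun ⟨y, hy⟩ => ⟨y ∘ e, hy⟩⟩

theorem setOf_eval_eq_zero (p : MvPolynomial ι R) : IsDiophantine {a : ι → R | eval a p = 0} :=
  ⟨0, rename Sum.inl p, by simp [eval_rename]⟩

theorem inter (hR : HasConjunctionPolynomial R) {S T : Set (ι → R)}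
    (hS : IsDiophantine S) (hT : IsDiophantine T) : IsDiophantine (S ∩ T) := by
  obtain ⟨h, hh⟩ := hR
  obtain ⟨m, f, rfl⟩ := hS
  obtain ⟨n, g, rfl⟩ := hT
  have hand : ∀ (v : ι ⊕ (Fin m ⊕ Fin n) → R) (F G : MvPolynomial (ι ⊕ (Fin m ⊕ Fin n)) R),
      eval v (bind₁ ![F, G] h) = 0 ↔ eval v F = 0 ∧ eval v G = 0 := fun v F G => by
    have : (fun i => eval v (![F, G] i)) = ![eval v F, eval v G] := by
      ext i; fin_cases i <;> rfl
    rw [eval_bind₁, this, hh]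
  convert setOf_exists_eval_eq_zero (τ := Fin m ⊕ Fin n)
    (bind₁ ![rename (Sum.map id Sum.inl) f, rename (Sum.map id Sum.inr) g] h) using 1
  ext a
  simp only [Set.mem_inter_iff, Set.mem_ofPred_eq, hand, eval_rename, Sum.elim_comp_map,
    Function.comp_id, Sum.elim_comp_inl, Sum.elim_comp_inr, exists_sumElim_iff, exists_and_left,
    exists_and_right]

theorem iInter (hR : HasConjunctionPolynomial R) {κ : Type*} [Finite κ] {S : κ → Set (ι → R)}
    (hS : ∀ i, IsDiophantine (S i)) : IsDiophantine (⋂ i, S i) := by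
  classical
  cases nonempty_fintype κ
  suffices ∀ s : Finset κ, IsDiophantine (⋂ i ∈ s, S i) by simpa using this Finset.univ
  intro s
  induction s using Finset.induction_on with
  | empty => simpa using setOf_eval_eq_zero (0 : MvPolynomial ι R)
  | insert i s _ ih => rw [Finset.set_biInter_insert]; exact (hS i).inter hR ih

theorem preimage_eval {κ : Type*} {S : Set (κ → R)} (hS : IsDiophantine S)
    (P : κ → MvPolynomial ι R) : IsDiophantine {a | (fun k => eval a (P k)) ∈ S} := by
  obtain ⟨m, f, rfl⟩ := hS
  refine ⟨m, bind₁ (Sum.elim (fun k => rename Sum.inl (P k)) (fun j => X (Sum.inr j))) f, ?_⟩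
  ext a
  refine exists_congr fun y => ?_
  have : (fun s => eval (Sum.elim a y) (Sum.elim (fun k => rename Sum.inl (P k))
      (fun j => X (Sum.inr j)) s)) = Sum.elim (fun k => eval a (P k)) y := by
    funext s; cases s <;> simp [eval_rename]
  rw [eval_bind₁, this]

theorem setOf_exists_sumElim_mem {κ : Type*} [Finite κ] {T : Set (ι ⊕ κ → R)} (hT : IsDiophantine T) :
    IsDiophantine {a | ∃ b : κ → R, Sum.elim a b ∈ T} := by
  obtain ⟨m, f, rfl⟩ := hT
  convert setOf_exists_eval_eq_zero (τ := κ ⊕ Fin m) (rename (Equiv.sumAssoc ι κ (Fin m)) f) using 1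
  ext a
  have hassoc : ∀ (b : κ → R) (y : Fin m → R),
      Sum.elim a (Sum.elim b y) ∘ Equiv.sumAssoc ι κ (Fin m) = Sum.elim (Sum.elim a b) y := by
    intro b y; funext s; rcases s with (_ | _) | _ <;> rfl
  simp only [Set.mem_ofPred_eq, eval_rename, exists_sumElim_iff, hassoc]

theorem pi (hR : HasConjunctionPolynomial R) [Finite ι] {T : ι → Set R}
    (hT : ∀ i, IsDiophantineSet (T i)) : IsDiophantine (Set.univ.pi T) := by
  convert iInter hR fun i => (hT i).preimage_eval (fun _ => X i) using 1
  ext a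
  simp

theorem image_eval (hR : HasConjunctionPolynomial R) [Finite ι] {κ : Type*} [Finite κ]
    {T : Set (κ → R)} (hT : IsDiophantine T) (P : ι → MvPolynomial κ R) :
    IsDiophantine ((fun b i => eval b (P i)) '' T) := by
  convert setOf_exists_sumElim_mem ((hT.preimage_eval fun k => X (Sum.inr k)).inter hR
    (iInter hR fun i => setOf_eval_eq_zero (X (Sum.inl i) - rename Sum.inr (P i)))) using 1
  ext a
  simp only [Set.mem_image, Set.mem_ofPred_eq, Set.mem_inter_iff, Set.mem_iInter, eval_sub,
    eval_X, eval_rename, Sum.elim_inl, Sum.elim_inr, sub_eq_zero, funext_iff]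
  exact exists_congr fun b => and_congr_right' (forall_congr' fun i => eq_comm)

theorem image_ringHom_comp {R₁ R₂ : Type*} [CommRing R₁] [CommRing R₂]
    (hR : HasConjunctionPolynomial R₂) {φ : R₁ →+* R₂} (hφ : Function.Injective φ)
    (hrange : IsDiophantineSet (Set.range φ)) [Finite ι] {S : Set (ι → R₁)}
    (hS : IsDiophantine S) : IsDiophantine ((φ ∘ ·) '' S) := by
  obtain ⟨m, f, rfl⟩ := hS
  convert setOf_exists_sumElim_mem ((pi hR fun _ => hrange).inter hR (setOf_eval_eq_zero (map φ f))) using 1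
  ext b
  simp only [Set.mem_image, Set.mem_ofPred_eq, ← Set.range_piMap, Set.mem_inter_iff,
    Set.mem_range, eval_map]
  constructor
  · rintro ⟨c, ⟨y, hy⟩, rfl⟩
    refine ⟨φ ∘ y, ⟨Sum.elim c y, Sum.comp_elim φ c y⟩, ?_⟩
    rw [← Sum.comp_elim, ← eval₂_comp, hy, map_zero]
  · rintro ⟨y, ⟨w, hw⟩, hzero⟩
    refine ⟨w ∘ Sum.inl, ⟨w ∘ Sum.inr, hφ ?_⟩, funext fun i => congrFun hw (Sum.inl i)⟩
    rw [Sum.elim_comp_inl_inr, map_zero, eval₂_comp]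
    exact (show φ ∘ w = Sum.elim b y from hw) ▸ hzero

end IsDiophantine

theorem computable_sum_univ {α β : Type*} [Primcodable α] [Primcodable β] [AddCommMonoid β]
    (hadd : Computable₂ fun x y : β => x + y) {n : ℕ} {f : Fin n → α → β}
    (hf : ∀ i, Computable (f i)) : Computable fun a => ∑ i, f i a := by
  induction n with
  | zero => simpa using Computable.const (0 : β)
  | succ n ih =>
    simpa only [Fin.sum_univ_succ] using hadd.comp (hf 0) (ih fun i => hf i.succ)

theorem listable_isDiophantine_of_extension_general
    (R₁ : Type) [CommRing R₁] [Primcodable R₁]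
    (R₂ : Type) [CommRing R₂] [IsDomain R₂] [Primcodable R₂]
    (K : Type v) [Field K] [Algebra R₂ K] [IsFractionRing R₂ K]
    (hK : ¬IsAlgClosed K)
    (hadd₂ : Computable fun p : R₂ × R₂ => p.1 + p.2)
    (hmul₂ : Computable fun p : R₂ × R₂ => p.1 * p.2)
    (ι : R₁ →+* R₂) (hιcomp : Computable fun x : R₁ => ι x)
    (hιinj : Function.Injective ι)
    (hrangeDio : IsDiophantineSet (Set.range ι))
    (r : ℕ) (ω : Fin r → R₂)
    (hgen : ∀ x : R₂, ∃ a : Fin r → R₁, x = ∑ i, ι (a i) * ω i)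
    (hdio : ∀ (k : ℕ) (S : Set (Fin k → R₁)), REPred (· ∈ S) → IsDiophantine S)
    (A : Set R₂) (hA : REPred (· ∈ A)) :
    IsDiophantineSet A := by
  have hR := hasConjunctionPolynomial_of_not_isAlgClosed R₂ K hK
  let Φ : (Fin r → R₁) → R₂ := fun c => ∑ i, ι (c i) * ω i
  have hmul : Computable₂ fun x y : R₂ => x * y := hmul₂
  have hΦ : Computable Φ := computable_sum_univ hadd₂ fun i =>
    hmul.comp
      (hιcomp.comp (Computable.fin_app.comp Computable.id (Computable.const i)))
      (Computable.const (ω i))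
  have hS : IsDiophantine {c : Fin r → R₁ | Φ c ∈ A} := hdio r _ (hA.comp hΦ)
  have hA' : {x : Fin 1 → R₂ | x 0 ∈ A} =
      (fun b _ => eval b (∑ i, X i * C (ω i))) '' ((ι ∘ ·) '' {c | Φ c ∈ A}) := by
    ext x
    simp only [Set.mem_ofPred_eq, map_sum, map_mul, eval_X, eval_C, Set.mem_image,
      exists_exists_and_eq_and, Function.comp_apply, Φ]
    constructor
    · intro hx
      obtain ⟨c, hc⟩ := hgen (x 0)
      exact ⟨c, hc ▸ hx, funext fun i => by rw [Fin.fin_one_eq_zero i, hc]⟩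
    · rintro ⟨c, hc, rfl⟩
      exact hc
  rw [IsDiophantineSet, hA']
  exact (hS.image_ringHom_comp hR hιinj hrangeDio).image_eval hR _

/-- Let `R₁`, `R₂` be computable commutative rings with `R₂` an integral domain
whose fraction field is not algebraically closed, `ι : R₁ → R₂` a computable injective ring
homomorphism whose range is decidable and Diophantine over `R₂`, and suppose `R₂` is generated
as an `R₁`-module by `ω₁, …, ω_r`.  If every computably enumerable subset of `R₁^k` is
Diophantine over `R₁` for every `k`, then every computably enumerable subset of `R₂` is
Diophantine over `R₂`. -/
theorem listable_isDiophantine_of_extension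
    (R₁ : Type) [CommRing R₁] [Primcodable R₁]
    (R₂ : Type) [CommRing R₂] [IsDomain R₂] [Primcodable R₂]
    (K : Type v) [Field K] [Algebra R₂ K] [IsFractionRing R₂ K]
    (hK : ¬IsAlgClosed K)
    (heq₁ : ComputablePred fun p : R₁ × R₁ => p.1 = p.2)
    (hadd₁ : Computable fun p : R₁ × R₁ => p.1 + p.2)
    (hmul₁ : Computable fun p : R₁ × R₁ => p.1 * p.2)
    (heq₂ : ComputablePred fun p : R₂ × R₂ => p.1 = p.2)
    (hadd₂ : Computable fun p : R₂ × R₂ => p.1 + p.2)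
    (hmul₂ : Computable fun p : R₂ × R₂ => p.1 * p.2)
    (ι : R₁ →+* R₂) (hιcomp : Computable fun x : R₁ => ι x)
    (hιinj : Function.Injective ι)
    (hrange : ComputablePred fun x : R₂ => x ∈ Set.range ι)
    (hrangeDio : IsDiophantineSet (Set.range ι))
    (r : ℕ) (ω : Fin r → R₂)
    (hgen : ∀ x : R₂, ∃ a : Fin r → R₁, x = ∑ i, ι (a i) * ω i)
    (hdio : ∀ (k : ℕ) (S : Set (Fin k → R₁)), REPred (· ∈ S) → IsDiophantine S)
    (A : Set R₂) (hA : REPred (· ∈ A)) :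
    IsDiophantineSet A :=
  listable_isDiophantine_of_extension_general R₁ R₂ K hK hadd₂ hmul₂ ι hιcomp hιinj hrangeDio r ω
    hgen hdio A hA
end

section
/- Let R_2 be an integral domain whose fraction field is not algebraically closed, and let R_1 ⊆ R_2 be a subring such that R_1, viewed as a subset of R_2, is Diophantine over R_2. Let ω_1,…,ω_r ∈ R_2, and let B ⊆ R_1^r be a set that is Diophantine over R_1. Then the set A = {Σ_{i=1}^r b_i·ω_i : (b_1,…,b_r) ∈ B} ⊆ R_2 is Diophantine over R_2. -/
universe u v

open MvPolynomial

section Aux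

lemma exists_combinerK (K : Type*) [Field K] (hK : ¬IsAlgClosed K) :
    ∃ (d : ℕ) (c : ℕ → K), 0 < d ∧
      ∀ a b : K, (∑ i ∈ Finset.range (d + 1), c i * a ^ i * b ^ (d - i)) = 0 → a = 0 ∧ b = 0 := by
  have : ¬ ∀ p : Polynomial K, p.Monic → Irreducible p → ∃ x, p.eval x = 0 :=
    fun H => hK (IsAlgClosed.of_exists_root K H)
  push_neg at this
  obtain ⟨p, hm, hirr, hroot⟩ := this
  refine ⟨p.natDegree, fun i => p.coeff i, hirr.natDegree_pos, ?_⟩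
  intro a b h
  rcases eq_or_ne b 0 with rfl | hb
  · refine ⟨?_, rfl⟩
    have hd := hirr.natDegree_pos
    have : ∑ i ∈ Finset.range (p.natDegree + 1), p.coeff i * a ^ i * (0:K) ^ (p.natDegree - i)
        = p.coeff p.natDegree * a ^ p.natDegree := by
      rw [Finset.sum_eq_single p.natDegree]
      · simp
      · intro i hi hne
        have : i < p.natDegree := lt_of_le_of_ne (Nat.lt_succ_iff.mp (Finset.mem_range.mp hi)) hne
        rw [zero_pow (by omega), mul_zero]
      · simp
    rw [this, hm.coeff_natDegree, one_mul] at h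
    exact pow_eq_zero_iff (by omega) |>.mp h
  · exfalso
    apply hroot (a / b)
    have key : b ^ p.natDegree * p.eval (a / b)
        = ∑ i ∈ Finset.range (p.natDegree + 1), p.coeff i * a ^ i * b ^ (p.natDegree - i) := by
      rw [Polynomial.eval_eq_sum_range, Finset.mul_sum]
      refine Finset.sum_congr rfl fun i hi => ?_
      have hi' : i ≤ p.natDegree := Nat.lt_succ_iff.mp (Finset.mem_range.mp hi)
      rw [div_pow, pow_sub₀ b hb hi']
      field_simp
    rw [h] at key
    rcases mul_eq_zero.mp key with h1 | h2
    · exact absurd (pow_eq_zero_iff (by have := hirr.natDegree_pos; omega) |>.mp h1) hb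
    · exact h2

lemma exists_combiner (R₂ : Type*) [CommRing R₂] [IsDomain R₂]
    (K : Type*) [Field K] [Algebra R₂ K] [IsFractionRing R₂ K] (hK : ¬IsAlgClosed K) :
    ∃ (d : ℕ) (c : ℕ → R₂), 0 < d ∧
      ∀ a b : R₂, (∑ i ∈ Finset.range (d + 1), c i * a ^ i * b ^ (d - i)) = 0 ↔ a = 0 ∧ b = 0 := by
  obtain ⟨d, cK, hd, hcK⟩ := exists_combinerK K hK
  obtain ⟨s, hs⟩ := IsLocalization.exist_integer_multiples (nonZeroDivisors R₂)
    (Finset.range (d + 1)) cK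
  classical
  set φ := algebraMap R₂ K with hφ
  have hinj : Function.Injective φ := IsFractionRing.injective R₂ K
  choose c hc using fun i (h : i ∈ Finset.range (d+1)) => hs i h
  refine ⟨d, fun i => if h : i ∈ Finset.range (d+1) then c i h else 0, hd, ?_⟩
  intro a b
  constructor
  · intro h
    have h' : φ (∑ i ∈ Finset.range (d + 1),
        (if h : i ∈ Finset.range (d+1) then c i h else 0) * a ^ i * b ^ (d - i)) = 0 := by
      rw [h, map_zero]
    rw [map_sum] at h'
    have h'' : (φ s) * ∑ i ∈ Finset.range (d + 1), cK i * (φ a) ^ i * (φ b) ^ (d - i) = 0 := by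
      rw [Finset.mul_sum, ← h']
      refine Finset.sum_congr rfl fun i hi => ?_
      rw [dif_pos hi, map_mul, map_mul, map_pow, map_pow, hc i hi]
      simp [Algebra.smul_def]
      ring
    have hsne : φ s ≠ 0 := by
      exact IsFractionRing.to_map_ne_zero_of_mem_nonZeroDivisors (K := K) s.2
    have := (mul_eq_zero.mp h'').resolve_left hsne
    obtain ⟨ha, hb⟩ := hcK _ _ this
    exact ⟨hinj (by simpa using ha), hinj (by simpa using hb)⟩
  · rintro ⟨rfl, rfl⟩
    refine Finset.sum_eq_zero fun i hi => ?_
    rcases Nat.eq_zero_or_pos i with rfl | hpos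
    · rw [zero_pow (show d - 0 ≠ 0 by omega), mul_zero]
    · rw [zero_pow (show i ≠ 0 by omega)]; ring

lemma list_combine {R₂ : Type*} [CommRing R₂] {V : Type*} (d : ℕ) (c : ℕ → R₂)
    (hc : ∀ a b : R₂, (∑ i ∈ Finset.range (d + 1), c i * a ^ i * b ^ (d - i)) = 0 ↔ a = 0 ∧ b = 0)
    (L : List (MvPolynomial V R₂)) :
    ∃ F : MvPolynomial V R₂, ∀ φ : V → R₂, eval φ F = 0 ↔ ∀ p ∈ L, eval φ p = 0 := by
  induction L with
  | nil => exact ⟨0, by simp⟩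
  | cons p L ih =>
    obtain ⟨F', hF'⟩ := ih
    refine ⟨∑ i ∈ Finset.range (d + 1), C (c i) * p ^ i * F' ^ (d - i), fun φ => ?_⟩
    have : eval φ (∑ i ∈ Finset.range (d + 1), C (c i) * p ^ i * F' ^ (d - i))
        = ∑ i ∈ Finset.range (d + 1), c i * (eval φ p) ^ i * (eval φ F') ^ (d - i) := by
      rw [map_sum]; exact Finset.sum_congr rfl fun i _ => by simp
    rw [this, hc]
    simp [hF']

lemma dio_of_fam {R₂ : Type*} [CommRing R₂] {ι : Type*}
    (d : ℕ) (c : ℕ → R₂)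
    (hc : ∀ a b : R₂, (∑ i ∈ Finset.range (d + 1), c i * a ^ i * b ^ (d - i)) = 0 ↔ a = 0 ∧ b = 0)
    (μ : Type) [Fintype μ] (κ : Type) [Fintype κ]
    (G : κ → MvPolynomial (ι ⊕ μ) R₂) (S : Set (ι → R₂))
    (hS : S = {a | ∃ y : μ → R₂, ∀ k, eval (Sum.elim a y) (G k) = 0}) :
    IsDiophantine S := by
  classical
  obtain ⟨F, hF⟩ := list_combine d c hc (Finset.univ.toList.map G)
  refine ⟨Fintype.card μ, rename (Sum.map id (Fintype.equivFin μ)) F, ?_⟩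
  rw [hS]
  ext a
  simp only [Set.mem_setOf_eq]
  set e := Fintype.equivFin μ with he
  have key : ∀ y : Fin (Fintype.card μ) → R₂,
      eval (Sum.elim a y) (rename (Sum.map id e) F)
        = eval (Sum.elim a (y ∘ e)) F := by
    intro y
    rw [eval_rename]
    have : Sum.elim a y ∘ Sum.map id e = Sum.elim a (y ∘ e) := by
      ext v; cases v <;> simp
    rw [this]
  constructor
  · rintro ⟨y, hy⟩
    refine ⟨y ∘ e.symm, ?_⟩
    rw [key, hF]
    intro p hp
    simp only [List.mem_map, Finset.mem_toList] at hp
    obtain ⟨k, -, rfl⟩ := hp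
    have h2 : (y ∘ e.symm) ∘ e = y := by ext v; simp
    rw [h2]
    exact hy k
  · rintro ⟨y, hy⟩
    refine ⟨y ∘ e, ?_⟩
    intro k
    rw [key, hF] at hy
    exact hy (G k) (by simp)

lemma eval₂_comp_hom {R₁ R₂ : Type*} [CommRing R₁] [CommRing R₂] (σ : R₁ →+* R₂)
    {V : Type*} (pt : V → R₁) (p : MvPolynomial V R₁) :
    eval₂ σ (σ ∘ pt) p = σ (eval pt p) := by
  have := eval₂_comp_left σ (RingHom.id R₁) pt p
  simpa [eval₂_id] using this.symm

end Aux

/-- Let `R₂` be an integral domain whose fraction field is not algebraically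
closed, `R₁ ⊆ R₂` a subring which is Diophantine over `R₂`, `ω₁, …, ω_r ∈ R₂`, and `B ⊆ R₁^r`
Diophantine over `R₁`.  Then `A = {Σ b_i ω_i : b ∈ B}` is Diophantine over `R₂`. -/
theorem image_of_diophantine_isDiophantine
    (R₂ : Type u) [CommRing R₂] [IsDomain R₂]
    (K : Type v) [Field K] [Algebra R₂ K] [IsFractionRing R₂ K]
    (hK : ¬IsAlgClosed K)
    (R₁ : Subring R₂)
    (hR₁ : IsDiophantineSet (R₁ : Set R₂))
    (r : ℕ) (ω : Fin r → R₂)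
    (B : Set (Fin r → R₁)) (hB : IsDiophantine B) :
    IsDiophantineSet {x : R₂ | ∃ b ∈ B, x = ∑ i, (b i : R₂) * ω i} := by
  classical
  obtain ⟨d, c, hd, hc⟩ := exists_combiner R₂ K hK
  obtain ⟨m₁, g, hg⟩ := hR₁
  obtain ⟨m₂, fB, hfB⟩ := hB
  have hmem : ∀ t : R₂, t ∈ R₁ ↔ ∃ y : Fin m₁ → R₂,
      eval (Sum.elim (fun _ : Fin 1 => t) y) g = 0 := by
    intro t
    have := Set.ext_iff.mp hg (fun _ : Fin 1 => t)
    simpa using this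
  set σ := R₁.subtype with hσ
  let ν := Fin r ⊕ Fin m₂
  let μ := ν ⊕ (ν × Fin m₁)
  let κ := Unit ⊕ Unit ⊕ ν
  let val : ν → Fin 1 ⊕ μ := fun v => Sum.inr (Sum.inl v)
  let wit : ν → Fin m₁ → Fin 1 ⊕ μ := fun v j => Sum.inr (Sum.inr (v, j))
  let G : κ → MvPolynomial (Fin 1 ⊕ μ) R₂ :=
    Sum.elim (fun _ => X (Sum.inl 0) - ∑ i, C (ω i) * X (val (Sum.inl i)))
      (Sum.elim (fun _ => rename val (MvPolynomial.map σ fB))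
        (fun v => rename (Sum.elim (fun _ : Fin 1 => val v) (wit v)) g))
  apply dio_of_fam d c hc μ κ G
  ext a
  simp only [Set.mem_setOf_eq]
  -- eval computations
  have eval1 : ∀ y : μ → R₂, eval (Sum.elim a y) (G (Sum.inl ()))
      = a 0 - ∑ i, ω i * y (Sum.inl (Sum.inl i)) := by
    intro y
    show eval (Sum.elim a y) (X (Sum.inl 0) - ∑ i, C (ω i) * X (val (Sum.inl i)))
      = a 0 - ∑ i, ω i * y (Sum.inl (Sum.inl i))
    rw [map_sub, eval_X, map_sum]
    simp [val]
  have eval2 : ∀ y : μ → R₂, eval (Sum.elim a y) (G (Sum.inr (Sum.inl ())))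
      = eval₂ σ (fun v => y (Sum.inl v)) fB := by
    intro y
    show eval (Sum.elim a y) (rename val (MvPolynomial.map σ fB)) = _
    rw [eval_rename, eval_map]
    rfl
  have eval3 : ∀ (y : μ → R₂) (v : ν), eval (Sum.elim a y) (G (Sum.inr (Sum.inr v)))
      = eval (Sum.elim (fun _ : Fin 1 => y (Sum.inl v)) (fun j => y (Sum.inr (v, j)))) g := by
    intro y v
    show eval (Sum.elim a y) (rename (Sum.elim (fun _ : Fin 1 => val v) (wit v)) g) = _
    rw [eval_rename]
    have h : Sum.elim a y ∘ Sum.elim (fun _ : Fin 1 => val v) (wit v)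
        = Sum.elim (fun _ : Fin 1 => y (Sum.inl v)) (fun j => y (Sum.inr (v, j))) := by
      ext u; cases u <;> rfl
    rw [h]
  constructor
  · rintro ⟨b, hbB, hx⟩
    rw [hfB] at hbB
    obtain ⟨w, hw⟩ := hbB
    set bw : ν → R₁ := Sum.elim b w with hbw
    have hz : ∀ v : ν, ∃ z : Fin m₁ → R₂,
        eval (Sum.elim (fun _ : Fin 1 => ((bw v : R₂))) z) g = 0 := fun v => (hmem _).mp (bw v).2
    choose z hzz using hz
    refine ⟨Sum.elim (fun v => (bw v : R₂)) (fun p => z p.1 p.2), ?_⟩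
    rintro (⟨⟩ | ⟨⟩ | v)
    · rw [eval1, hx]
      simp only [Sum.elim_inl]
      rw [sub_eq_zero]
      exact Finset.sum_congr rfl fun i _ => by rw [mul_comm]; rfl
    · rw [eval2]
      have hpt : (fun v : ν => Sum.elim (fun v => ((bw v : R₂))) (fun p : ν × Fin m₁ => z p.1 p.2) (Sum.inl v)) = σ ∘ bw := rfl
      rw [hpt, eval₂_comp_hom, hw, map_zero]
    · rw [eval3]
      exact hzz v
  · rintro ⟨y, hy⟩
    have h3 : ∀ v : ν, y (Sum.inl v) ∈ R₁ := by
      intro v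
      rw [hmem]
      refine ⟨fun j => y (Sum.inr (v, j)), ?_⟩
      rw [← eval3 y v]
      exact hy (Sum.inr (Sum.inr v))
    set bw : ν → R₁ := fun v => ⟨y (Sum.inl v), h3 v⟩ with hbw
    have h2 := hy (Sum.inr (Sum.inl ()))
    rw [eval2] at h2
    have hpt : (fun v : ν => y (Sum.inl v)) = σ ∘ bw := rfl
    rw [hpt, eval₂_comp_hom] at h2
    have h2' : eval bw fB = 0 := by
      have : ((eval bw fB : R₁) : R₂) = 0 := h2
      exact_mod_cast this
    refine ⟨bw ∘ Sum.inl, ?_, ?_⟩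
    · rw [hfB]
      refine ⟨bw ∘ Sum.inr, ?_⟩
      rw [Sum.elim_comp_inl_inr]
      exact h2'
    · have h1 := hy (Sum.inl ())
      rw [eval1, sub_eq_zero] at h1
      rw [h1]
      exact Finset.sum_congr rfl fun i _ => by rw [mul_comm]; rfl
end

section
/- Let N be a finite Galois extension of a field L with Galois group G = Gal(N/L), let M be an intermediate field of N/L, and let S = Gal(N/M) ≤ G be the subgroup fixing M pointwise. Then [M:L] equals the number of L-algebra automorphisms of M multiplied by the index [G : N_G(S)] of the normalizer of S in G (the latter being the number of conjugate subgroups of S in G). -/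
/-!
By the Galois correspondence `[M:L] = [G : S]`, and `[G : S] = [N_G(S) : S] · [G : N_G(S)]`.
An automorphism `σ ∈ G` normalizes `S` iff `σ(M) = M`, because `Gal(N/σ(M)) = σ S σ⁻¹` and `M` is
recovered from `S` as its fixed field. Restriction to `M` is thus a homomorphism
`N_G(S) → Aut(M/L)` with kernel `S`, surjective since every automorphism of `M` lifts to `N`,
so `[N_G(S) : S] = |Aut(M/L)|`.
-/

universe u v

open IntermediateField Subgroup

open scoped Pointwise

namespace IntermediateField

variable {K E : Type*} [Field K] [Field E] [Algebra K E] {M : IntermediateField K E}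

theorem map_liftNormal_eq [Normal K E] (τ : M ≃ₐ[K] M) : M.map (τ.liftNormal E) = M := by
  have h : (τ.liftNormal E : E →ₐ[K] E).comp M.val = M.val.comp τ :=
    AlgHom.ext (τ.liftNormal_commutes E)
  rw [← fieldRange_comp_val, h]
  ext x
  simp only [AlgHom.mem_fieldRange, AlgHom.comp_apply, AlgEquiv.coe_toAlgHom]
  exact ⟨by rintro ⟨y, rfl⟩; exact (τ y).2, fun hx ↦ ⟨τ.symm ⟨x, hx⟩, by simp⟩⟩

variable [IsGalois K E]

theorem mem_normalizer_fixingSubgroup_iff (σ : E ≃ₐ[K] E) :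
    σ ∈ normalizer (M.fixingSubgroup : Set (E ≃ₐ[K] E)) ↔ M.map σ = M := by
  rw [mem_normalizer_iff_map_conj_eq]
  change MulAut.conj σ • M.fixingSubgroup = _ ↔ _
  rw [← IsGalois.map_fixingSubgroup]
  refine ⟨fun h ↦ ?_, fun h ↦ by rw [h]⟩
  simpa only [InfiniteGalois.fixedField_fixingSubgroup] using congrArg fixedField h

noncomputable def restrictNormalizer :
    normalizer (M.fixingSubgroup : Set (E ≃ₐ[K] E)) →* (M ≃ₐ[K] M) where
  toFun σ := (intermediateFieldMap σ.1 M).trans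
    (equivOfEq ((mem_normalizer_fixingSubgroup_iff σ.1).1 σ.2))
  map_one' := rfl
  map_mul' _ _ := rfl

theorem restrictNormalizer_apply (σ : normalizer (M.fixingSubgroup : Set (E ≃ₐ[K] E))) (x : M) :
    (restrictNormalizer σ x : E) = σ.1 x := rfl

theorem restrictNormalizer_surjective :
    Function.Surjective (restrictNormalizer (M := M)) := by
  intro τ
  refine ⟨⟨τ.liftNormal E, (mem_normalizer_fixingSubgroup_iff _).2 (map_liftNormal_eq τ)⟩, ?_⟩
  ext x
  exact τ.liftNormal_commutes E x

theorem ker_restrictNormalizer :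
    (restrictNormalizer (M := M)).ker =
      M.fixingSubgroup.subgroupOf (normalizer (M.fixingSubgroup : Set (E ≃ₐ[K] E))) := by
  ext σ
  simp [AlgEquiv.ext_iff, Subtype.ext_iff, restrictNormalizer_apply, mem_subgroupOf,
    mem_fixingSubgroup_iff]

theorem card_algEquiv_eq_relIndex_normalizer_fixingSubgroup :
    Nat.card (M ≃ₐ[K] M) =
      M.fixingSubgroup.relIndex (normalizer (M.fixingSubgroup : Set (E ≃ₐ[K] E))) := by
  rw [relIndex, index, ← ker_restrictNormalizer, Nat.card_congr
    (QuotientGroup.quotientKerEquivOfSurjective _ restrictNormalizer_surjective).toEquiv]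

end IntermediateField

theorem finrank_eq_card_automorphisms_mul_index_normalizer_general
    (L : Type u) (N : Type v) [Field L] [Field N] [Algebra L N]
    [IsGalois L N]
    (M : IntermediateField L N) :
    Module.finrank L M =
      Nat.card (M ≃ₐ[L] M) * (Subgroup.normalizer (IntermediateField.fixingSubgroup M : Set (N ≃ₐ[L] N))).index := by
  rw [finrank_eq_fixingSubgroup_index, card_algEquiv_eq_relIndex_normalizer_fixingSubgroup,
    relIndex_mul_index le_normalizer]

/-- Let `N/L` be a finite Galois extension with Galois group `G`, `M` an
intermediate field, and `S = Gal(N/M)` the subgroup of `G` fixing `M` pointwise.  Then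
`[M:L]` equals the number of `L`-algebra automorphisms of `M` times the index `[G : N_G(S)]`
of the normalizer of `S` in `G` (the number of conjugates of `S` in `G`). -/
theorem finrank_eq_card_automorphisms_mul_index_normalizer
    (L : Type u) (N : Type v) [Field L] [Field N] [Algebra L N]
    [FiniteDimensional L N] [IsGalois L N]
    (M : IntermediateField L N) :
    Module.finrank L M =
      Nat.card (M ≃ₐ[L] M) * (Subgroup.normalizer (IntermediateField.fixingSubgroup M : Set (N ≃ₐ[L] N))).index :=
  finrank_eq_card_automorphisms_mul_index_normalizer_general L N M
end
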